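/- The sequence a_n = (5 - 3n - 2√(3n² - 8n + 5))/(n+1), defined for integers n ≥ 3, is monotonically decreasing, and the sequence b_n = (5 - 3n + 2√(3n² - 8n + 5))/(n+1) is monotonically increasing. -/
import Mathlib


open Real

lemma aux_setup (x : ℝ) (hx : 3 ≤ x) :
    (Real.sqrt (3 * x ^ 2 - 8 * x + 5)) ^ 2 = 3 * x ^ 2 - 8 * x + 5 :=
  Real.sq_sqrt (by nlinarith)

lemma aux1 (x : ℝ) (hx : 3 ≤ x) :
    (5 - 3 * (x + 1) - 2 * Real.sqrt (3 * (x + 1) ^ 2 - 8 * (x + 1) + 5)) / ((x + 1) + 1)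
      ≤ (5 - 3 * x - 2 * Real.sqrt (3 * x ^ 2 - 8 * x + 5)) / (x + 1) := by
  set s := Real.sqrt (3 * x ^ 2 - 8 * x + 5) with hs
  set t := Real.sqrt (3 * (x + 1) ^ 2 - 8 * (x + 1) + 5) with ht
  have hs2 : s ^ 2 = 3 * x ^ 2 - 8 * x + 5 := aux_setup x hx
  have ht2 : t ^ 2 = 3 * (x + 1) ^ 2 - 8 * (x + 1) + 5 := aux_setup (x + 1) (by linarith)
  have hsnn : 0 ≤ s := Real.sqrt_nonneg _
  have htnn : 0 ≤ t := Real.sqrt_nonneg _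
  have key : (x + 2) * s ≤ (x + 1) * t := by
    nlinarith [mul_nonneg hsnn htnn, sq_nonneg (s + t), sq_nonneg (s - t),
      mul_nonneg (mul_nonneg hsnn htnn) (by linarith : (0:ℝ) ≤ x)]
  rw [div_le_div_iff₀ (by linarith) (by linarith)]
  nlinarith [key]

lemma aux2 (x : ℝ) (hx : 3 ≤ x) :
    (5 - 3 * x + 2 * Real.sqrt (3 * x ^ 2 - 8 * x + 5)) / (x + 1)
      ≤ (5 - 3 * (x + 1) + 2 * Real.sqrt (3 * (x + 1) ^ 2 - 8 * (x + 1) + 5)) / ((x + 1) + 1) := by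
  set s := Real.sqrt (3 * x ^ 2 - 8 * x + 5) with hs
  set t := Real.sqrt (3 * (x + 1) ^ 2 - 8 * (x + 1) + 5) with ht
  have hs2 : s ^ 2 = 3 * x ^ 2 - 8 * x + 5 := aux_setup x hx
  have ht2 : t ^ 2 = 3 * (x + 1) ^ 2 - 8 * (x + 1) + 5 := aux_setup (x + 1) (by linarith)
  have hsnn : 0 ≤ s := Real.sqrt_nonneg _
  have htnn : 0 ≤ t := Real.sqrt_nonneg _
  have hS : ((x + 2) * s) ^ 2 = (x + 2) ^ 2 * (3 * x ^ 2 - 8 * x + 5) := by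
    rw [mul_pow, hs2]
  have hT : ((x + 1) * t) ^ 2 = (x + 1) ^ 2 * (3 * (x + 1) ^ 2 - 8 * (x + 1) + 5) := by
    rw [mul_pow, ht2]
  have hpos : 0 < 8 * (x + 2) * s + (14 * x ^ 2 + 10 * x - 36) := by
    have : 0 ≤ 8 * (x + 2) * s := by positivity
    nlinarith
  have h8 : 8 * (x + 2) * s ≤ 14 * x ^ 2 + 10 * x - 36 := by
    nlinarith [hpos, hS, sq_nonneg (x - 3), sq_nonneg (x + 1)]
  have hsig : 0 < (x + 2) * s + 4 + (x + 1) * t := by positivity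
  have key : (x + 2) * s + 4 ≤ (x + 1) * t := by
    nlinarith [h8, hsig, hS, hT]
  rw [div_le_div_iff₀ (by linarith) (by linarith)]
  nlinarith [key]

theorem stmt2 :
    (∀ n : ℕ, 3 ≤ n →
      (5 - 3 * ((n : ℝ) + 1) - 2 * Real.sqrt (3 * ((n : ℝ) + 1) ^ 2 - 8 * ((n : ℝ) + 1) + 5)) / (((n : ℝ) + 1) + 1)
        ≤ (5 - 3 * (n : ℝ) - 2 * Real.sqrt (3 * (n : ℝ) ^ 2 - 8 * (n : ℝ) + 5)) / ((n : ℝ) + 1)) ∧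
    (∀ n : ℕ, 3 ≤ n →
      (5 - 3 * (n : ℝ) + 2 * Real.sqrt (3 * (n : ℝ) ^ 2 - 8 * (n : ℝ) + 5)) / ((n : ℝ) + 1)
        ≤ (5 - 3 * ((n : ℝ) + 1) + 2 * Real.sqrt (3 * ((n : ℝ) + 1) ^ 2 - 8 * ((n : ℝ) + 1) + 5)) / (((n : ℝ) + 1) + 1)) := by
  constructor
  · intro n hn
    exact aux1 n (by exact_mod_cast hn)
  · intro n hn
    exact aux2 n (by exact_mod_cast hn)
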